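/- In the setting of the previous example (L = L^p, M = {-z + E_{Q⁰}[z] : z ∈ L₊} - L₊), the superhedging cost ρ⁰ fails the Fatou property: there exists z ∈ L₊ unbounded above with ρ⁰(-z) = ∞, but zₙ := z ∧ n increases to z and ρ⁰(-zₙ) ≤ E_{Q⁰}[zₙ] → E_{Q⁰}[z] < ∞. -/

import Mathlib

noncomputable section
open MeasureTheory Filter Topology
open scoped ENNReal

/-- The superhedging cost `ρ⁰(x) = inf {c ∈ ℝ : ∃ m ∈ M, c + m + x ≥ 0 a.s.}`. -/
def supCost {Ω : Type*} [MeasurableSpace Ω] (μ : MeasureTheory.Measure Ω)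
    (M : Set (Ω → ℝ)) (x : Ω → ℝ) : EReal :=
  sInf {c : EReal | ∃ r : ℝ, c = (r : EReal) ∧ ∃ m ∈ M, ∀ᵐ ω ∂μ, 0 ≤ r + m ω + x ω}

/-- The market of Example 2.1: `M = {-z + E_{Q⁰}[z] : z ∈ L^p₊} - L^p₊`. -/
def exMarket {Ω : Type*} [MeasurableSpace Ω] (μ : MeasureTheory.Measure Ω)
    (p : ℝ≥0∞) (d0 : Ω → ℝ) : Set (Ω → ℝ) :=
  {m | ∃ z w : Ω → ℝ, MeasureTheory.MemLp z p μ ∧ 0 ≤ᵐ[μ] z ∧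
    MeasureTheory.MemLp w p μ ∧ 0 ≤ᵐ[μ] w ∧
    m = fun ω => (-(z ω) + ∫ ω', d0 ω' * z ω' ∂μ) - w ω}

/-!
Every position `m = -y + E_{Q⁰}[y] - w` of the market is a.s. bounded above by `E_{Q⁰}[y]`, so no
real capital `c` can make `c + m - z` a.s. nonnegative when `z` is unbounded: `ρ⁰(-z) = ∞`.
A bounded claim `zₙ = z ∧ n`, on the other hand, is superhedged at cost `E_{Q⁰}[zₙ]` by holding
`y = n - zₙ ∈ L^p₊`, and `E_{Q⁰}[zₙ] → E_{Q⁰}[z]` by dominated convergence, `d0 * z` being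
integrable by Hölder's inequality.
-/

section

variable {Ω : Type*} [MeasurableSpace Ω] {μ : Measure Ω}

theorem supCost_le {M : Set (Ω → ℝ)} {x m : Ω → ℝ} {r : ℝ} (hm : m ∈ M)
    (h : ∀ᵐ ω ∂μ, 0 ≤ r + m ω + x ω) : supCost μ M x ≤ r :=
  sInf_le ⟨r, rfl, m, hm, h⟩

theorem supCost_neg_eq_top {M : Set (Ω → ℝ)} {z : Ω → ℝ}
    (hM : ∀ m ∈ M, ∃ C : ℝ, m ≤ᵐ[μ] fun _ => C) (hz : ∀ C : ℝ, ¬ z ≤ᵐ[μ] fun _ => C) :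
    supCost μ M (-z) = ⊤ := by
  rw [supCost, sInf_eq_top]
  rintro _ ⟨r, rfl, m, hm, hhedge⟩
  obtain ⟨C, hC⟩ := hM m hm
  refine (hz (r + C) ?_).elim
  filter_upwards [hhedge, hC] with ω h1 h2
  simp only [Pi.neg_apply] at h1
  linarith

theorem exMarket_ae_le_const {p : ℝ≥0∞} {d0 m : Ω → ℝ} (hm : m ∈ exMarket μ p d0) :
    ∃ C : ℝ, m ≤ᵐ[μ] fun _ => C := by
  obtain ⟨y, w, -, hy, -, hw, rfl⟩ := hm
  refine ⟨∫ ω, d0 ω * y ω ∂μ, ?_⟩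
  filter_upwards [hy, hw] with ω h1 h2
  simp only [Pi.zero_apply] at h1 h2
  linarith

theorem supCost_exMarket_neg_le_integral [IsFiniteMeasure μ] {p : ℝ≥0∞} {d0 y : Ω → ℝ} {b : ℝ}
    (hd0 : Integrable d0 μ) (hd0mass : ∫ ω, d0 ω ∂μ = 1)
    (hy : AEStronglyMeasurable y μ) (hyb : ∀ᵐ ω ∂μ, ‖y ω‖ ≤ b) :
    supCost μ (exMarket μ p d0) (-y) ≤ (∫ ω, d0 ω * y ω ∂μ : ℝ) := by
  have hyb' : ∀ᵐ ω ∂μ, 0 ≤ b - y ω ∧ b - y ω ≤ 2 * b := by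
    filter_upwards [hyb] with ω h
    have := abs_le.1 (Real.norm_eq_abs _ ▸ h)
    constructor <;> linarith
  have hhedge : MemLp (fun ω => b - y ω) p μ := by
    refine MemLp.of_bound (aestronglyMeasurable_const.sub hy) (2 * b) ?_
    filter_upwards [hyb'] with ω h
    rw [Real.norm_of_nonneg h.1]
    exact h.2
  have hcost : ∫ ω, d0 ω * (b - y ω) ∂μ = b - ∫ ω, d0 ω * y ω ∂μ := by
    simp only [mul_sub]
    rw [integral_sub (hd0.mul_const b) (hd0.mul_bdd hy hyb), integral_mul_const, hd0mass, one_mul]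
  refine supCost_le ⟨fun ω => b - y ω, 0, hhedge, hyb'.mono fun _ h => h.1, MemLp.zero,
    EventuallyLE.rfl, rfl⟩ (Eventually.of_forall fun ω => ?_)
  simp only [hcost, Pi.neg_apply, Pi.zero_apply]
  linarith

theorem tendsto_min_natCast_atTop (a : ℝ) : Tendsto (fun n : ℕ => min a n) atTop (𝓝 a) :=
  tendsto_const_nhds.congr' <| (tendsto_natCast_atTop_atTop.eventually_ge_atTop a).mono
    fun _ hn => (min_eq_left hn).symm

theorem tendsto_integral_mul_min_natCast {f z : Ω → ℝ} (hf : AEStronglyMeasurable f μ)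
    (hz : AEStronglyMeasurable z μ) (hzpos : 0 ≤ᵐ[μ] z)
    (hfz : Integrable (fun ω => f ω * z ω) μ) :
    Tendsto (fun n : ℕ => ∫ ω, f ω * min (z ω) n ∂μ) atTop (𝓝 (∫ ω, f ω * z ω ∂μ)) := by
  refine tendsto_integral_of_dominated_convergence (fun ω => ‖f ω * z ω‖)
    (fun n => hf.mul (hz.aemeasurable.min aemeasurable_const).aestronglyMeasurable) hfz.norm
    (fun n => ?_)
    (Eventually.of_forall fun ω => (tendsto_min_natCast_atTop (z ω)).const_mul (f ω))
  filter_upwards [hzpos] with ω hω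
  rw [norm_mul, norm_mul, Real.norm_of_nonneg (le_min hω n.cast_nonneg), Real.norm_of_nonneg hω]
  gcongr
  exact min_le_left _ _

end

theorem stmt_7_general {Ω : Type*} [MeasurableSpace Ω] (μ : MeasureTheory.Measure Ω)
    [MeasureTheory.IsProbabilityMeasure μ]
    (p q : ℝ≥0∞) (hpq : p⁻¹ + q⁻¹ = 1)
    (d0 : Ω → ℝ) (hd0mem : MeasureTheory.MemLp d0 q μ)
    (hd0mass : (∫ ω, d0 ω ∂μ) = 1)
    (z : Ω → ℝ) (hz : MeasureTheory.MemLp z p μ) (hzpos : 0 ≤ᵐ[μ] z)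
    (hub : ∀ C : ℝ, ¬ (z ≤ᵐ[μ] fun _ => C)) :
    supCost μ (exMarket μ p d0) (-z) = ⊤ ∧
    (∀ ω, Monotone fun n : ℕ => min (z ω) n) ∧
    (∀ ω, Tendsto (fun n : ℕ => min (z ω) n) atTop (nhds (z ω))) ∧
    (∀ n : ℕ, supCost μ (exMarket μ p d0) (fun ω => -(min (z ω) n)) ≤
      (↑(∫ ω, d0 ω * min (z ω) n ∂μ) : EReal)) ∧
    Tendsto (fun n : ℕ => ∫ ω, d0 ω * min (z ω) n ∂μ) atTop
      (nhds (∫ ω, d0 ω * z ω ∂μ)) := by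
  have : p.HolderConjugate q := ENNReal.holderConjugate_iff.2 hpq
  have hd0 : Integrable d0 μ := hd0mem.integrable (ENNReal.HolderConjugate.one_le q p)
  have hd0z : Integrable (fun ω => d0 ω * z ω) μ := hd0mem.integrable_mul hz
  refine ⟨supCost_neg_eq_top (fun _ => exMarket_ae_le_const) hub,
    fun ω _ _ h => min_le_min_left _ (Nat.cast_le.2 h), fun ω => tendsto_min_natCast_atTop _,
    fun n => supCost_exMarket_neg_le_integral (b := n) hd0 hd0mass
      (hz.aestronglyMeasurable.aemeasurable.min aemeasurable_const).aestronglyMeasurable ?_,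
    tendsto_integral_mul_min_natCast hd0mem.aestronglyMeasurable hz.aestronglyMeasurable hzpos hd0z⟩
  filter_upwards [hzpos] with ω hω
  rw [Real.norm_of_nonneg (le_min hω n.cast_nonneg)]
  exact min_le_right _ _

/-- in the setting of Example 2.1 the superhedging cost fails the Fatou
property: for `z ∈ L^p₊` unbounded from above, `ρ⁰(-z) = ∞`, while `zₙ := z ∧ n`
increases to `z` and `ρ⁰(-zₙ) ≤ E_{Q⁰}[zₙ] → E_{Q⁰}[z] < ∞`. -/
theorem stmt_7 {Ω : Type*} [MeasurableSpace Ω] (μ : MeasureTheory.Measure Ω)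
    [MeasureTheory.IsProbabilityMeasure μ]
    (p q : ℝ≥0∞) (hp : 1 ≤ p) (hp' : p ≠ ⊤) (hpq : p⁻¹ + q⁻¹ = 1)
    (d0 : Ω → ℝ) (hd0mem : MeasureTheory.MemLp d0 q μ)
    (hd0pos : 0 ≤ᵐ[μ] d0) (hd0mass : (∫ ω, d0 ω ∂μ) = 1)
    (z : Ω → ℝ) (hz : MeasureTheory.MemLp z p μ) (hzpos : 0 ≤ᵐ[μ] z)
    (hub : ∀ C : ℝ, ¬ (z ≤ᵐ[μ] fun _ => C)) :
    supCost μ (exMarket μ p d0) (-z) = ⊤ ∧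
    (∀ ω, Monotone fun n : ℕ => min (z ω) n) ∧
    (∀ ω, Tendsto (fun n : ℕ => min (z ω) n) atTop (nhds (z ω))) ∧
    (∀ n : ℕ, supCost μ (exMarket μ p d0) (fun ω => -(min (z ω) n)) ≤
      (↑(∫ ω, d0 ω * min (z ω) n ∂μ) : EReal)) ∧
    Tendsto (fun n : ℕ => ∫ ω, d0 ω * min (z ω) n ∂μ) atTop
      (nhds (∫ ω, d0 ω * z ω ∂μ)) :=
  stmt_7_general μ p q hpq d0 hd0mem hd0mass z hz hzpos hub
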